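/- arXiv:2303.16285 — 3 statements merged into one kernel-verified Lean document; each statement's English description precedes it below -/
import Mathlib

section
/- For real numbers ê ≥ 0 and c ≥ 0, the integral ∫_{ê}^{∞} 2·exp(-x²/2) dx is at most ∫_{ê}^{∞} (exp(-(x-c)²/2) + exp(-(x+c)²/2)) dx, with equality when ê = 0. -/
open MeasureTheory Real Set intervalIntegral

/-!
Write `Φ(t) = ∫_t^∞ g` for `g x = exp (-x²/2)`; the claim is `2 Φ(ê) ≤ Φ(ê - c) + Φ(ê + c)`,
i.e. `∫_ê^{ê+c} g ≤ ∫_{ê-c}^ê g`. Reflecting the right-hand integral through `ê` turns it into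
`∫_ê^{ê+c} g (2ê - x)`, and `|2ê - x| ≤ |x|` there because `ê ≥ 0`, while `g` decreases in `|x|`.
For `ê = 0` the reflection is `x ↦ -x` and `g` is even, so the two integrals agree.
-/

theorem integral_Ici_comp_add_right {E : Type*} [NormedAddCommGroup E] [NormedSpace ℝ E]
    (f : ℝ → E) (a d : ℝ) : ∫ x in Ici a, f (x + d) = ∫ x in Ici (a + d), f x := by
  have := (measurePreserving_add_right volume d).setIntegral_preimage_emb
    (measurableEmbedding_addRight d) f (Ici (a + d))
  rwa [preimage_add_const_Ici, add_sub_cancel_right] at this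

theorem integral_Ici_comp_sub_right {E : Type*} [NormedAddCommGroup E] [NormedSpace ℝ E]
    (f : ℝ → E) (a d : ℝ) : ∫ x in Ici a, f (x - d) = ∫ x in Ici (a - d), f x := by
  simpa only [sub_eq_add_neg] using integral_Ici_comp_add_right f a (-d)

theorem integral_Ici_sub_add_integral_Ici_add_sub_two_mul {f : ℝ → ℝ} (hf : Integrable f)
    (e c : ℝ) :
    (∫ x in Ici (e - c), f x) + (∫ x in Ici (e + c), f x) - 2 * ∫ x in Ici e, f x =
      (∫ x in e - c..e, f x) - ∫ x in e..e + c, f x := by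
  have hleft := integral_Ici_sub_Ici' hf.integrableOn hf.integrableOn (a := e - c) (b := e)
  have hright := integral_Ici_sub_Ici' hf.integrableOn hf.integrableOn (a := e) (b := e + c)
  linarith

theorem integral_le_integral_reflect {f : ℝ → ℝ} (hf : Integrable f)
    (hmono : ∀ x y, |x| ≤ |y| → f y ≤ f x) {e c : ℝ} (he : 0 ≤ e) (hc : 0 ≤ c) :
    ∫ x in e..e + c, f x ≤ ∫ x in e - c..e, f x := by
  have hreflect : ∫ x in e..e + c, f (2 * e - x) = ∫ x in e - c..e, f x := by
    rw [integral_comp_sub_left f (2 * e)]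
    ring_nf
  rw [← hreflect]
  refine integral_mono_on (by linarith) hf.intervalIntegrable
    (hf.comp_sub_left (2 * e)).intervalIntegrable fun x hx => hmono _ _ ?_
  rw [abs_of_nonneg (he.trans hx.1), abs_le]
  constructor <;> linarith [hx.1]

theorem Function.Even.integral_Ici_neg_add_Ici {f : ℝ → ℝ} (hf : Integrable f)
    (heven : Function.Even f) (c : ℝ) :
    (∫ x in Ici (-c), f x) + ∫ x in Ici c, f x = 2 * ∫ x in Ici 0, f x := by
  have hreflect : ∫ x in -c..0, f x = ∫ x in 0..c, f x := by
    simpa [heven _] using (integral_comp_neg (a := 0) (b := c) f).symm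
  have := integral_Ici_sub_add_integral_Ici_add_sub_two_mul hf 0 c
  rw [zero_sub, zero_add, hreflect, sub_self, sub_eq_zero] at this
  exact this

theorem two_mul_integral_Ici_le_add {f : ℝ → ℝ} (hf : Integrable f)
    (hmono : ∀ x y, |x| ≤ |y| → f y ≤ f x) {e : ℝ} (he : 0 ≤ e) (c : ℝ) :
    2 * ∫ x in Ici e, f x ≤ (∫ x in Ici (e - c), f x) + ∫ x in Ici (e + c), f x := by
  wlog hc : 0 ≤ c generalizing c
  · have := this (-c) (by linarith)
    rwa [sub_neg_eq_add, ← sub_eq_add_neg, add_comm] at this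
  have := integral_Ici_sub_add_integral_Ici_add_sub_two_mul hf e c
  linarith [integral_le_integral_reflect hf hmono he hc]

theorem integrable_exp_neg_sq_div_two : Integrable fun x : ℝ => exp (-x ^ 2 / 2) := by
  refine (integrable_exp_neg_mul_sq (by norm_num : (0 : ℝ) < 1 / 2)).congr
    (.of_forall fun x => ?_)
  ring_nf

theorem exp_neg_sq_div_two_le_of_abs_le {x y : ℝ} (h : |x| ≤ |y|) :
    exp (-y ^ 2 / 2) ≤ exp (-x ^ 2 / 2) := by
  have := sq_le_sq.mpr h
  rw [exp_le_exp]
  linarith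

theorem stmt_1_general (ehat c : ℝ) (hehat : 0 ≤ ehat) :
    ((∫ x in Set.Ici ehat, 2 * Real.exp (-x ^ 2 / 2)) ≤
      ∫ x in Set.Ici ehat,
        (Real.exp (-(x - c) ^ 2 / 2) + Real.exp (-(x + c) ^ 2 / 2))) ∧
    (ehat = 0 →
      (∫ x in Set.Ici ehat, 2 * Real.exp (-x ^ 2 / 2)) =
        ∫ x in Set.Ici ehat,
          (Real.exp (-(x - c) ^ 2 / 2) + Real.exp (-(x + c) ^ 2 / 2))) := by
  set g : ℝ → ℝ := fun x => exp (-x ^ 2 / 2) with hg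
  have hint : Integrable g := integrable_exp_neg_sq_div_two
  have hshift : ∫ x in Ici ehat, (g (x - c) + g (x + c)) =
      (∫ x in Ici (ehat - c), g x) + ∫ x in Ici (ehat + c), g x := by
    rw [integral_add (hint.comp_sub_right c).integrableOn (hint.comp_add_right c).integrableOn,
      integral_Ici_comp_sub_right, integral_Ici_comp_add_right]
  change ∫ x in Ici ehat, 2 * g x ≤ ∫ x in Ici ehat, (g (x - c) + g (x + c)) ∧
    (ehat = 0 → ∫ x in Ici ehat, 2 * g x = ∫ x in Ici ehat, (g (x - c) + g (x + c)))
  rw [MeasureTheory.integral_const_mul, hshift]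
  refine ⟨two_mul_integral_Ici_le_add hint (fun _ _ => exp_neg_sq_div_two_le_of_abs_le) hehat c,
    ?_⟩
  rintro rfl
  have heven : Function.Even g := fun x => by simp only [hg, neg_sq]
  rw [zero_sub, zero_add, heven.integral_Ici_neg_add_Ici hint c]

theorem stmt_1 (ehat c : ℝ) (hehat : 0 ≤ ehat) (hc : 0 ≤ c) :
    ((∫ x in Set.Ici ehat, 2 * Real.exp (-x ^ 2 / 2)) ≤
      ∫ x in Set.Ici ehat,
        (Real.exp (-(x - c) ^ 2 / 2) + Real.exp (-(x + c) ^ 2 / 2))) ∧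
    (ehat = 0 →
      (∫ x in Set.Ici ehat, 2 * Real.exp (-x ^ 2 / 2)) =
        ∫ x in Set.Ici ehat,
          (Real.exp (-(x - c) ^ 2 / 2) + Real.exp (-(x + c) ^ 2 / 2))) :=
  stmt_1_general ehat c hehat
end

section
/- For every nonnegative measurable function V : ℝ₊ → ℝ₊ that is non-decreasing and integrable against Gaussian kernels, and every real a and e ≥ 0, ∫_{0}^{∞} 2·exp(-x²/2)·V(x) dx ≤ ∫_{0}^{∞} (exp(-(x - a·e)²/2) + exp(-(x + a·e)²/2))·V(x) dx. -/
/-! Both sides integrate `V` over `[0, ∞)` against a weight: `2φ`, resp. `φ(· - c) + φ(· + c)`,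
with `φ` the Gaussian. By the layer-cake formula it suffices to compare the two weights on the
superlevel sets of `V`; since `V` is monotone these are, up to a point, half-lines `(s, ∞)` with
`s ≥ 0`. There the tail inequality `2 T(s) ≤ T(s - c) + T(s + c)`, `T(s) = ∫_s^∞ φ`, holds for every
even `φ` that decreases on `[0, ∞)`: reflecting in `s` shows that `φ` has no more mass on
`(s, s + c]` than on `(s - c, s]`. -/

open MeasureTheory Real Set Filter
open scoped ENNReal

theorem Function.Even.apply_le_apply_of_abs_le {β : Type*} [Preorder β] {φ : ℝ → β}
    (heven : φ.Even) (hanti : AntitoneOn φ (Ici 0)) {x y : ℝ} (h : |x| ≤ |y|) : φ y ≤ φ x := by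
  have habs : ∀ z, φ |z| = φ z := fun z => by
    rcases abs_choice z with hz | hz <;> rw [hz]
    exact heven z
  rw [← habs x, ← habs y]
  exact hanti (abs_nonneg x) (abs_nonneg y) h

theorem setLIntegral_Ioi_eq_Ioc_add_Ioi {μ : Measure ℝ} (f : ℝ → ℝ≥0∞) {u v : ℝ} (h : u ≤ v) :
    ∫⁻ x in Ioi u, f x ∂μ = ∫⁻ x in Ioc u v, f x ∂μ + ∫⁻ x in Ioi v, f x ∂μ := by
  rw [← Ioc_union_Ioi_eq_Ioi h, lintegral_union measurableSet_Ioi (Ioc_disjoint_Ioi le_rfl)]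

theorem setLIntegral_Ioc_right_le_left {φ : ℝ → ℝ≥0∞} (heven : φ.Even)
    (hanti : AntitoneOn φ (Ici 0)) {s : ℝ} (hs : 0 ≤ s) (c : ℝ) :
    ∫⁻ x in Ioc s (s + c), φ x ≤ ∫⁻ x in Ioc (s - c) s, φ x :=
  calc ∫⁻ x in Ioc s (s + c), φ x
      ≤ ∫⁻ x in Ioc s (s + c), φ (2 * s - x) := by
        refine setLIntegral_mono' measurableSet_Ioc fun x hx => ?_
        refine heven.apply_le_apply_of_abs_le hanti (abs_le_abs ?_ ?_) <;> linarith [hx.1]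
    _ = ∫⁻ x in Ico (s - c) s, φ x := by
        convert (Measure.measurePreserving_sub_left volume (2 * s)).setLIntegral_comp_preimage_emb
          (measurableEmbedding_subLeft _) φ (Ico (s - c) s) using 3
        rw [preimage_const_sub_Ico]
        congr 1 <;> ring
    _ = ∫⁻ x in Ioc (s - c) s, φ x := setLIntegral_congr Ico_ae_eq_Ioc

theorem two_mul_setLIntegral_Ioi_le {φ : ℝ → ℝ≥0∞} (heven : φ.Even)
    (hanti : AntitoneOn φ (Ici 0)) {s : ℝ} (hs : 0 ≤ s) (c : ℝ) :
    ∫⁻ x in Ioi s, 2 * φ x ≤ ∫⁻ x in Ioi s, (φ (x - c) + φ (x + c)) := by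
  wlog hc : 0 ≤ c generalizing c
  · convert this (-c) (by linarith) using 3 with x
    rw [sub_neg_eq_add, ← sub_eq_add_neg, add_comm]
  have hshift_sub : ∫⁻ x in Ioi s, φ (x - c) = ∫⁻ x in Ioi (s - c), φ x := by
    have := (measurePreserving_sub_right volume c).setLIntegral_comp_preimage_emb
      (measurableEmbedding_subRight c) φ (Ioi (s - c))
    rwa [preimage_sub_const_Ioi, sub_add_cancel] at this
  have hshift_add : ∫⁻ x in Ioi s, φ (x + c) = ∫⁻ x in Ioi (s + c), φ x := by
    have := (measurePreserving_add_right volume c).setLIntegral_comp_preimage_emb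
      (measurableEmbedding_addRight c) φ (Ioi (s + c))
    rwa [preimage_add_const_Ioi, add_sub_cancel_right] at this
  have hleft := setLIntegral_Ioi_eq_Ioc_add_Ioi (μ := volume) φ (by linarith : s - c ≤ s)
  have hright := setLIntegral_Ioi_eq_Ioc_add_Ioi (μ := volume) φ (by linarith : s ≤ s + c)
  have hrefl := setLIntegral_Ioc_right_le_left heven hanti hs c
  calc ∫⁻ x in Ioi s, 2 * φ x
      = (∫⁻ x in Ioi s, φ x) + ((∫⁻ x in Ioc s (s + c), φ x) + ∫⁻ x in Ioi (s + c), φ x) := by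
        rw [lintegral_const_mul' _ _ ENNReal.ofNat_ne_top, two_mul, ← hright]
    _ ≤ (∫⁻ x in Ioi s, φ x) + ((∫⁻ x in Ioc (s - c) s, φ x) + ∫⁻ x in Ioi (s + c), φ x) :=
        add_le_add le_rfl (add_le_add hrefl le_rfl)
    _ = (∫⁻ x in Ioi s, φ (x - c)) + ∫⁻ x in Ioi s, φ (x + c) := by
        rw [hshift_sub, hshift_add, hleft]; ring
    _ ≤ ∫⁻ x in Ioi s, (φ (x - c) + φ (x + c)) := le_lintegral_add _ _

theorem IsUpperSet.ae_eq_Ioi_csInf {μ : Measure ℝ} [NullSingletonClass μ] {S : Set ℝ}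
    (hS : IsUpperSet S) (hne : S.Nonempty) (hbdd : BddBelow S) : S =ᵐ[μ] Ioi (sInf S) := by
  refine EventuallyLE.antisymm ?_ (LE.le.eventuallyLE fun y hy => ?_)
  · exact (LE.le.eventuallyLE fun x hx => csInf_le hbdd hx).trans Ioi_ae_eq_Ici.symm.le
  · obtain ⟨x, hxS, hxy⟩ := exists_lt_of_csInf_lt hne hy
    exact hS hxy.le hxS

theorem setLIntegral_le_of_isUpperSet {μ : Measure ℝ} [NullSingletonClass μ] {w₁ w₂ : ℝ → ℝ≥0∞}
    (htail : ∀ s, 0 ≤ s → ∫⁻ x in Ioi s, w₁ x ∂μ ≤ ∫⁻ x in Ioi s, w₂ x ∂μ)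
    {S : Set ℝ} (hS : IsUpperSet S) (hS0 : S ⊆ Ici 0) :
    ∫⁻ x in S, w₁ x ∂μ ≤ ∫⁻ x in S, w₂ x ∂μ := by
  rcases S.eq_empty_or_nonempty with rfl | hne
  · simp
  have hae := hS.ae_eq_Ioi_csInf (μ := μ) hne ⟨0, hS0⟩
  rw [setLIntegral_congr hae, setLIntegral_congr hae]
  exact htail _ (le_csInf hne hS0)

theorem setLIntegral_mul_ofReal_eq_lintegral_superlevel {α : Type*} [MeasurableSpace α]
    {μ : Measure α} {w : α → ℝ≥0∞} (hw : Measurable w) {V : α → ℝ} (hVm : Measurable V)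
    (hV0 : ∀ x, 0 ≤ V x) (A : Set α) :
    ∫⁻ x in A, w x * ENNReal.ofReal (V x) ∂μ =
      ∫⁻ t in Ioi 0, ∫⁻ x in {x | t < V x} ∩ A, w x ∂μ := by
  have hdensity := lintegral_withDensity_eq_lintegral_mul (μ.restrict A) hw
    (g := fun x => ENNReal.ofReal (V x)) (by fun_prop)
  rw [Pi.mul_def] at hdensity
  rw [← hdensity, lintegral_eq_lintegral_meas_lt _ (ae_of_all _ hV0) hVm.aemeasurable]
  refine lintegral_congr fun t => ?_
  have hlevel : MeasurableSet {x | t < V x} := measurableSet_lt measurable_const hVm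
  rw [withDensity_apply _ hlevel, Measure.restrict_restrict hlevel]

theorem setLIntegral_Ici_mul_le_of_tail_le {μ : Measure ℝ} [NullSingletonClass μ]
    {w₁ w₂ : ℝ → ℝ≥0∞} (hw₁ : Measurable w₁) (hw₂ : Measurable w₂)
    (htail : ∀ s, 0 ≤ s → ∫⁻ x in Ioi s, w₁ x ∂μ ≤ ∫⁻ x in Ioi s, w₂ x ∂μ)
    {V : ℝ → ℝ} (hVm : Measurable V) (hV0 : ∀ x, 0 ≤ V x) (hVmono : MonotoneOn V (Ici 0)) :
    ∫⁻ x in Ici 0, w₁ x * ENNReal.ofReal (V x) ∂μ ≤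
      ∫⁻ x in Ici 0, w₂ x * ENNReal.ofReal (V x) ∂μ := by
  rw [setLIntegral_mul_ofReal_eq_lintegral_superlevel hw₁ hVm hV0,
    setLIntegral_mul_ofReal_eq_lintegral_superlevel hw₂ hVm hV0]
  refine lintegral_mono fun t => setLIntegral_le_of_isUpperSet htail ?_ inter_subset_right
  rintro x y hxy ⟨hx, hx0⟩
  exact ⟨hx.trans_le (hVmono hx0 (le_trans hx0 hxy) hxy), le_trans hx0 hxy⟩

theorem integral_Ici_two_mul_le_integral_shift {φ : ℝ → ℝ} (hφm : Measurable φ)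
    (hφ0 : ∀ x, 0 ≤ φ x) (heven : φ.Even) (hanti : AntitoneOn φ (Ici 0))
    {V : ℝ → ℝ} (hVm : Measurable V) (hV0 : ∀ x, 0 ≤ V x) (hVmono : MonotoneOn V (Ici 0))
    {c : ℝ} (hint : IntegrableOn (fun x => (φ (x - c) + φ (x + c)) * V x) (Ici 0)) :
    ∫ x in Ici 0, 2 * φ x * V x ≤ ∫ x in Ici 0, (φ (x - c) + φ (x + c)) * V x := by
  have key := setLIntegral_Ici_mul_le_of_tail_le (μ := volume)
    (w₁ := fun x => 2 * ENNReal.ofReal (φ x))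
    (w₂ := fun x => ENNReal.ofReal (φ (x - c)) + ENNReal.ofReal (φ (x + c)))
    (by fun_prop) (by fun_prop)
    (fun s hs => two_mul_setLIntegral_Ioi_le (heven.left_comp ENNReal.ofReal)
      (fun x hx y hy hxy => ENNReal.ofReal_le_ofReal (hanti hx hy hxy)) hs c) hVm hV0 hVmono
  rw [integral_eq_lintegral_of_nonneg_ae
      (ae_of_all _ fun x => mul_nonneg (mul_nonneg zero_le_two (hφ0 x)) (hV0 x)) (by fun_prop),
    integral_eq_lintegral_of_nonneg_ae
      (ae_of_all _ fun x => mul_nonneg (add_nonneg (hφ0 _) (hφ0 _)) (hV0 x)) (by fun_prop)]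
  refine ENNReal.toReal_mono hint.lintegral_lt_top.ne ?_
  have hlhs (x : ℝ) : ENNReal.ofReal (2 * φ x * V x) =
      2 * ENNReal.ofReal (φ x) * ENNReal.ofReal (V x) := by
    rw [ENNReal.ofReal_mul (mul_nonneg zero_le_two (hφ0 x)), ENNReal.ofReal_mul zero_le_two,
      ENNReal.ofReal_ofNat]
  have hrhs (x : ℝ) : ENNReal.ofReal ((φ (x - c) + φ (x + c)) * V x) =
      (ENNReal.ofReal (φ (x - c)) + ENNReal.ofReal (φ (x + c))) * ENNReal.ofReal (V x) := by
    rw [ENNReal.ofReal_mul (add_nonneg (hφ0 _) (hφ0 _)),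
      ENNReal.ofReal_add (hφ0 _) (hφ0 _)]
  simpa only [hlhs, hrhs] using key

theorem stmt_5_general (a e : ℝ)
    (V : ℝ → ℝ) (hVmeas : Measurable V) (hVpos : ∀ x, 0 ≤ V x)
    (hVmono : MonotoneOn V (Set.Ici 0))
    (hVint : ∀ d : ℝ, IntegrableOn
      (fun x => (Real.exp (-(x - d) ^ 2 / 2) + Real.exp (-(x + d) ^ 2 / 2)) * V x)
      (Set.Ici 0)) :
    (∫ x in Set.Ici (0 : ℝ), 2 * Real.exp (-x ^ 2 / 2) * V x) ≤
      ∫ x in Set.Ici (0 : ℝ),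
        (Real.exp (-(x - a * e) ^ 2 / 2) + Real.exp (-(x + a * e) ^ 2 / 2)) * V x := by
  refine integral_Ici_two_mul_le_integral_shift (φ := fun x => exp (-x ^ 2 / 2)) (by fun_prop)
    (fun x => (exp_pos _).le) (fun x => by simp) ?_ hVmeas hVpos hVmono (hVint (a * e))
  intro x hx y hy hxy
  exact exp_le_exp.2 (by nlinarith [mem_Ici.1 hx])

theorem stmt_5 (a e : ℝ) (he : 0 ≤ e)
    (V : ℝ → ℝ) (hVmeas : Measurable V) (hVpos : ∀ x, 0 ≤ V x)
    (hVmono : MonotoneOn V (Set.Ici 0))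
    (hVint : ∀ d : ℝ, IntegrableOn
      (fun x => (Real.exp (-(x - d) ^ 2 / 2) + Real.exp (-(x + d) ^ 2 / 2)) * V x)
      (Set.Ici 0)) :
    (∫ x in Set.Ici (0 : ℝ), 2 * Real.exp (-x ^ 2 / 2) * V x) ≤
      ∫ x in Set.Ici (0 : ℝ),
        (Real.exp (-(x - a * e) ^ 2 / 2) + Real.exp (-(x + a * e) ^ 2 / 2)) * V x :=
  stmt_5_general a e V hVmeas hVpos hVmono hVint
end

section
/- Fix a ∈ ℝ. For nonnegative reals e' ≥ e ≥ 0 and any bounded non-decreasing measurable V : ℝ₊ → ℝ₊, with ψ(x, c) := exp(-(x-c)²/2) + exp(-(x+c)²/2): e'² + β·∫_{0}^{∞} ψ(z, a·e')·V(z) dz ≥ e² + β·∫_{0}^{∞} ψ(z, a·e)·V(z) dz for any β ≥ 0. -/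
/-!
For a kernel `g` that is integrable and radially non-increasing (here `g x = exp (-x²/2)`), the
folded integral `∫_{z ≥ 0} (g (z - c) + g (z + c)) V z` equals `∫ g u · V |u + c| du`. Given
`|c| ≤ c'`, reflect the half-line `u ≤ b := -(c + c')/2` onto `u > b` by `u ↦ 2b - u`: this
swaps `|u + c|` and `|u + c'|`, so the difference of the integrals for `c'` and `c` becomes
`∫_{u > b} (g u - g (2b - u)) (V |u + c'| - V |u + c|)`, whose integrand is a product of two
non-negative factors because `|u| ≤ |2b - u|` and `|u + c| ≤ |u + c'|` there.
-/

open MeasureTheory Real Set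

lemma integral_eq_setIntegral_Ioi_add_reflection {f : ℝ → ℝ} (hf : Integrable f) (b : ℝ) :
    ∫ x, f x = ∫ x in Ioi b, (f x + f (2 * b - x)) := by
  have reflect : ∫ x in Iic b, f x = ∫ x in Ioi b, f (2 * b - x) := by
    have hpre : (fun x : ℝ => 2 * b - x) ⁻¹' Iic b = Ici b := by
      ext x; simp only [mem_preimage, mem_Iic, mem_Ici]; constructor <;> intro h <;> linarith
    rw [← integral_Ici_eq_integral_Ioi, ← hpre,
      (volume.measurePreserving_sub_left (2 * b)).setIntegral_preimage_emb
        (Homeomorph.subLeft (2 * b)).measurableEmbedding]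
  rw [integral_add hf.integrableOn (hf.comp_sub_left _).integrableOn, ← reflect, ← compl_Ioi,
    integral_add_compl measurableSet_Ioi hf]

lemma integral_mul_comp_abs_add_le {g W : ℝ → ℝ} (hg : Integrable g)
    (hg_anti : ∀ x y, |x| ≤ |y| → g y ≤ g x) (hW : Measurable W) {C : ℝ} (hWC : ∀ x, ‖W x‖ ≤ C)
    (hW_mono : MonotoneOn W (Ici 0)) {c c' : ℝ} (hcc' : |c| ≤ c') :
    ∫ u, g u * W |u + c| ≤ ∫ u, g u * W |u + c'| := by
  have hint : ∀ d, Integrable fun u => g u * W |u + d| := fun d =>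
    hg.mul_bdd (hW.comp (measurable_add_const d).abs).aestronglyMeasurable
      (.of_forall fun _ => hWC _)
  set b := -(c + c') / 2 with hb
  rw [integral_eq_setIntegral_Ioi_add_reflection (hint c) b,
    integral_eq_setIntegral_Ioi_add_reflection (hint c') b]
  refine setIntegral_mono_on ((hint c).add ((hint c).comp_sub_left _)).integrableOn
    ((hint c').add ((hint c').comp_sub_left _)).integrableOn measurableSet_Ioi fun u hu => ?_
  have hu : b < u := hu
  obtain ⟨hc₁, hc₂⟩ := abs_le.1 hcc'
  have swap : |2 * b - u + c| = |u + c'| ∧ |2 * b - u + c'| = |u + c| := by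
    constructor <;> rw [← abs_neg] <;> congr 1 <;> ring
  have hg_le : g (2 * b - u) ≤ g u := hg_anti _ _ (by
    rw [abs_le]; constructor <;> cases abs_cases (2 * b - u) <;> linarith)
  have hW_le : W |u + c| ≤ W |u + c'| :=
    hW_mono (mem_Ici.2 (abs_nonneg _)) (mem_Ici.2 (abs_nonneg _)) (by
      rw [abs_le]; constructor <;> cases abs_cases (u + c') <;> linarith)
  rw [swap.1, swap.2]
  nlinarith [mul_nonneg (sub_nonneg.2 hg_le) (sub_nonneg.2 hW_le)]

lemma setIntegral_Ici_folded_eq_integral {g W : ℝ → ℝ} (hg : Integrable g)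
    (hg_even : ∀ x, g (-x) = g x) (hW : Measurable W) {C : ℝ} (hWC : ∀ x, ‖W x‖ ≤ C) (c : ℝ) :
    ∫ z in Ici 0, (g (z - c) + g (z + c)) * W z = ∫ u, g u * W |u + c| := by
  have hint : Integrable fun x => g (x - c) * W |x| :=
    (hg.comp_sub_right c).mul_bdd (hW.comp measurable_abs).aestronglyMeasurable
      (.of_forall fun _ => hWC _)
  have shift : ∫ u, g u * W |u + c| = ∫ x, g (x - c) * W |x| := by
    rw [← integral_sub_right_eq_self (fun u => g u * W |u + c|) c]
    simp only [sub_add_cancel]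
  rw [shift, integral_eq_setIntegral_Ioi_add_reflection hint 0, integral_Ici_eq_integral_Ioi]
  refine setIntegral_congr_fun measurableSet_Ioi fun z (hz : 0 < z) => ?_
  simp only [mul_zero, zero_sub, abs_neg, abs_of_pos hz]
  rw [show -z - c = -(z + c) by ring, hg_even]
  ring

lemma setIntegral_Ici_folded_mono {g W : ℝ → ℝ} (hg : Integrable g)
    (hg_anti : ∀ x y, |x| ≤ |y| → g y ≤ g x) (hW : Measurable W) {C : ℝ} (hWC : ∀ x, ‖W x‖ ≤ C)
    (hW_mono : MonotoneOn W (Ici 0)) {c c' : ℝ} (hcc' : |c| ≤ |c'|) :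
    ∫ z in Ici 0, (g (z - c) + g (z + c)) * W z ≤
      ∫ z in Ici 0, (g (z - c') + g (z + c')) * W z := by
  have hg_even (x : ℝ) : g (-x) = g x :=
    le_antisymm (hg_anti _ _ (abs_neg x).ge) (hg_anti _ _ (abs_neg x).le)
  have folded_abs : ∫ z in Ici 0, (g (z - c') + g (z + c')) * W z
      = ∫ z in Ici 0, (g (z - |c'|) + g (z + |c'|)) * W z := by
    rcases abs_choice c' with h | h <;> rw [h]
    simp only [sub_neg_eq_add, ← sub_eq_add_neg, add_comm]
  rw [folded_abs, setIntegral_Ici_folded_eq_integral hg hg_even hW hWC,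
    setIntegral_Ici_folded_eq_integral hg hg_even hW hWC]
  exact integral_mul_comp_abs_add_le hg hg_anti hW hWC hW_mono hcc'

theorem stmt_19 (a β e e' : ℝ) (hβ : 0 ≤ β) (he : 0 ≤ e) (hee : e ≤ e')
    (V : ℝ → ℝ) (hVmeas : Measurable V) (hVpos : ∀ x, 0 ≤ V x)
    (hVmono : MonotoneOn V (Set.Ici 0)) (hVbd : ∃ C : ℝ, ∀ x, V x ≤ C) :
    e' ^ 2 + β * ∫ z in Set.Ici (0 : ℝ),
        (Real.exp (-(z - a * e') ^ 2 / 2) + Real.exp (-(z + a * e') ^ 2 / 2)) * V z ≥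
      e ^ 2 + β * ∫ z in Set.Ici (0 : ℝ),
        (Real.exp (-(z - a * e) ^ 2 / 2) + Real.exp (-(z + a * e) ^ 2 / 2)) * V z := by
  obtain ⟨C, hC⟩ := hVbd
  have hgauss_int : Integrable fun x : ℝ => exp (-x ^ 2 / 2) :=
    (integrable_exp_neg_mul_sq one_half_pos).congr (.of_forall fun x => by ring_nf)
  have hgauss_anti (x y : ℝ) (h : |x| ≤ |y|) : exp (-y ^ 2 / 2) ≤ exp (-x ^ 2 / 2) := by
    have := sq_le_sq.2 h
    gcongr
  have hintegral_le := setIntegral_Ici_folded_mono hgauss_int hgauss_anti hVmeas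
    (C := C) (fun x => by rw [norm_of_nonneg (hVpos x)]; exact hC x) hVmono
    (c := a * e) (c' := a * e') (by rw [abs_mul, abs_mul]; gcongr)
  have hsq : e ^ 2 ≤ e' ^ 2 := by gcongr
  linarith [mul_le_mul_of_nonneg_left hintegral_le hβ]
end
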